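/- arXiv:1811.02859 — 7 statements merged into one kernel-verified Lean document; each statement's English description precedes it below -/
import Mathlib

section
/- Let 0 < d₁ < d₂, α > 0, and D = d₂^α / d₁^α. Let |h₁|², |h₂|² be independent Exp(1) random variables, and let O be an event independent of (|h₁|², |h₂|²) with P(O) = p (the event that the estimated distance order is reversed, d̂₁ > d̂₂). Then the decoding order error probability P_e² := P(Oᶜ ∩ {|h₁|² d₁^{−α} < |h₂|² d₂^{−α}}) + P(O ∩ {|h₁|² d₁^{−α} > |h₂|² d₂^{−α}}) satisfies P_e² = ((D−1)/(D+1))·p + 1/(D+1). -/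
open MeasureTheory ProbabilityTheory Real Set

/-! Since `O` is independent of the fading, the error probability is the mixture
`(1 - p) P(g₁ < g₂) + p P(g₂ < g₁)` of the two channel-gain orderings, where `gₘ = |hₘ|² dₘ^{-α}`.
Multiplying by `d₁^α`, `{g₁ < g₂} = {|h₁|² < D⁻¹ |h₂|²}`. For independent
`X ~ Exp(r)`, `Y ~ Exp(s)`, conditioning on `X` gives `P(X < c Y) = E[e^{-(s/c) X}] = r c / (r c + s)`,
the Laplace transform of `Exp(r)` at `s / c`; with `r = s = 1` the two orderings have
probabilities `1 / (D + 1)` and `D / (D + 1)`. -/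

lemma mul_rpow_neg_lt_mul_rpow_neg_iff {a b α x y : ℝ} (ha : 0 < a) (hb : 0 < b) :
    x * a ^ (-α) < y * b ^ (-α) ↔ x < (b ^ α / a ^ α)⁻¹ * y := by
  rw [rpow_neg ha.le, rpow_neg hb.le, inv_div, ← div_eq_mul_inv, ← div_eq_mul_inv,
    div_lt_iff₀ (rpow_pos_of_pos ha α), div_mul_eq_mul_div, div_mul_eq_mul_div, mul_comm y]

namespace ProbabilityTheory

variable {r : ℝ}

lemma ae_nonneg_expMeasure : ∀ᵐ x ∂expMeasure r, 0 ≤ x := by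
  simp only [ae_iff, not_le]
  change expMeasure r (Iio 0) = 0
  rw [expMeasure, gammaMeasure, withDensity_apply _ measurableSet_Iio]
  exact lintegral_exponentialPDF_of_nonpos le_rfl

lemma expMeasure_Ioi (hr : 0 < r) {x : ℝ} (hx : 0 ≤ x) :
    expMeasure r (Ioi x) = ENNReal.ofReal (exp (-(r * x))) := by
  have := isProbabilityMeasure_expMeasure hr
  have hcdf : 0 ≤ 1 - exp (-(r * x)) :=
    sub_nonneg.2 (exp_le_one_iff.2 (neg_nonpos.2 (mul_nonneg hr.le hx)))
  rw [← compl_Iic, prob_compl_eq_one_sub measurableSet_Iic, ← ofReal_cdf, cdf_expMeasure_eq hr,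
    if_pos hx, ← ENNReal.ofReal_one, ← ENNReal.ofReal_sub _ hcdf, sub_sub_cancel]

lemma lintegral_exp_neg_mul_expMeasure (hr : 0 < r) {b : ℝ} (hb : 0 ≤ b) :
    ∫⁻ x, ENNReal.ofReal (exp (-(b * x))) ∂expMeasure r = ENNReal.ofReal (r / (r + b)) := by
  have hdens : ∀ x, exponentialPDF r x * ENNReal.ofReal (exp (-(b * x)))
      = (Ici 0).indicator (fun x => ENNReal.ofReal (r * exp ((-(r + b)) * x))) x := by
    intro x
    rcases le_or_gt 0 x with hx | hx
    · rw [indicator_of_mem (mem_Ici.2 hx), exponentialPDF_of_nonneg hx,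
        ← ENNReal.ofReal_mul (by positivity), mul_assoc, ← exp_add]
      ring_nf
    · rw [indicator_of_notMem (notMem_Ici.2 hx), exponentialPDF_of_neg hx, zero_mul]
  have hint : IntegrableOn (fun x => r * exp ((-(r + b)) * x)) (Ioi 0) :=
    (integrableOn_exp_mul_Ioi (by linarith) 0).const_mul r
  have hpdf : Measurable (exponentialPDF r) := (measurable_exponentialPDFReal r).ennreal_ofReal
  rw [show expMeasure r = volume.withDensity (exponentialPDF r) from rfl,
    lintegral_withDensity_eq_lintegral_mul _ hpdf (by fun_prop)]
  simp only [Pi.mul_apply, hdens]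
  rw [lintegral_indicator measurableSet_Ici, setLIntegral_congr Ioi_ae_eq_Ici.symm,
    ← ofReal_integral_eq_lintegral_ofReal hint (ae_of_all _ fun x => by positivity),
    integral_const_mul, integral_exp_mul_Ioi (by linarith)]
  rw [mul_zero, exp_zero, neg_div_neg_eq, mul_one_div]

lemma expMeasure_prod_lt_const_mul {s c : ℝ} (hr : 0 < r) (hs : 0 < s) (hc : 0 < c) :
    (expMeasure r).prod (expMeasure s) {q | q.1 < c * q.2}
      = ENNReal.ofReal (r * c / (r * c + s)) := by
  have := isProbabilityMeasure_expMeasure hs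
  have hslice (x : ℝ) : Prod.mk x ⁻¹' {q : ℝ × ℝ | q.1 < c * q.2} = Ioi (x / c) := by
    ext y
    exact (div_lt_iff₀' hc).symm
  have hae : ∀ᵐ x ∂expMeasure r,
      expMeasure s (Prod.mk x ⁻¹' {q : ℝ × ℝ | q.1 < c * q.2})
        = ENNReal.ofReal (exp (-(s / c * x))) := by
    filter_upwards [ae_nonneg_expMeasure] with x hx
    rw [hslice, expMeasure_Ioi hs (div_nonneg hx hc.le), mul_div, div_mul_eq_mul_div]
  rw [Measure.prod_apply (measurableSet_lt measurable_fst (measurable_snd.const_mul c)),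
    lintegral_congr_ae hae, lintegral_exp_neg_mul_expMeasure hr (div_nonneg hs.le hc.le)]
  congr 1
  field_simp

variable {Ω : Type*} {mΩ : MeasurableSpace Ω} {P : Measure Ω} [IsProbabilityMeasure P]

lemma measureReal_lt_const_mul_of_indepFun_expMeasure {X Y : Ω → ℝ} {s c : ℝ} (hr : 0 < r)
    (hs : 0 < s) (hc : 0 < c) (hX : P.map X = expMeasure r) (hY : P.map Y = expMeasure s)
    (hXY : IndepFun X Y P) :
    P.real {ω | X ω < c * Y ω} = r * c / (r * c + s) := by
  have hXm : AEMeasurable X P := .of_map_ne_zero <| by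
    rw [hX]; exact (isProbabilityMeasure_expMeasure hr).ne_zero
  have hYm : AEMeasurable Y P := .of_map_ne_zero <| by
    rw [hY]; exact (isProbabilityMeasure_expMeasure hs).ne_zero
  have hlaw := (indepFun_iff_map_prod_eq_prod_map_map hXm hYm).1 hXY
  rw [hX, hY] at hlaw
  have hS : MeasurableSet {q : ℝ × ℝ | q.1 < c * q.2} :=
    measurableSet_lt measurable_fst (measurable_snd.const_mul c)
  change (P ((fun ω => (X ω, Y ω)) ⁻¹' {q | q.1 < c * q.2})).toReal = _
  rw [← Measure.map_apply_of_aemeasurable (hXm.prodMk hYm) hS, hlaw,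
    expMeasure_prod_lt_const_mul hr hs hc, ENNReal.toReal_ofReal (by positivity)]

lemma Indep.measureReal_compl_inter_add_measureReal_inter {m : MeasurableSpace Ω} {O A B : Set Ω}
    (h : Indep (MeasurableSpace.generateFrom {O}) m P) (hO : MeasurableSet[mΩ] O)
    (hA : MeasurableSet[m] A) (hB : MeasurableSet[m] B) :
    P.real (Oᶜ ∩ A) + P.real (O ∩ B) = (1 - P.real O) * P.real A + P.real O * P.real B := by
  have hOgen : MeasurableSet[MeasurableSpace.generateFrom {O}] O :=
    MeasurableSpace.measurableSet_generateFrom rfl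
  rw [← probReal_compl_eq_one_sub hO]
  simp only [measureReal_def,
    (Indep_iff _ _ P).1 h _ _ hOgen.compl hA, (Indep_iff _ _ P).1 h _ _ hOgen hB,
    ENNReal.toReal_mul]

end ProbabilityTheory


theorem decoding_order_error_probability_rayleigh_general
    {Ω : Type*} [MeasurableSpace Ω] (P : Measure Ω) [IsProbabilityMeasure P]
    (d₁ d₂ α D p : ℝ) (hd₁ : 0 < d₁) (hd : d₁ < d₂)
    (hD : D = d₂ ^ α / d₁ ^ α)
    (h1sq h2sq : Ω → ℝ)
    (hlaw1 : P.map h1sq = expMeasure 1) (hlaw2 : P.map h2sq = expMeasure 1)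
    (hind : IndepFun h1sq h2sq P)
    (O : Set Ω) (hO : MeasurableSet O) (hp : (P O).toReal = p)
    (hindO : Indep (MeasurableSpace.generateFrom {O})
      (MeasurableSpace.comap (fun ω => (h1sq ω, h2sq ω)) inferInstance) P) :
    (P (Oᶜ ∩ {ω | h1sq ω * d₁ ^ (-α) < h2sq ω * d₂ ^ (-α)})).toReal +
    (P (O ∩ {ω | h2sq ω * d₂ ^ (-α) < h1sq ω * d₁ ^ (-α)})).toReal =
      (D - 1) / (D + 1) * p + 1 / (D + 1) := by
  have hd₂ : 0 < d₂ := hd₁.trans hd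
  have hDpos : 0 < D := hD ▸ div_pos (rpow_pos_of_pos hd₂ α) (rpow_pos_of_pos hd₁ α)
  set mFading := MeasurableSpace.comap (fun ω => (h1sq ω, h2sq ω)) inferInstance
  have h1m : Measurable[mFading] h1sq := measurable_fst.comp (comap_measurable _)
  have h2m : Measurable[mFading] h2sq := measurable_snd.comp (comap_measurable _)
  have hP₁₂ : P.real {ω | h1sq ω * d₁ ^ (-α) < h2sq ω * d₂ ^ (-α)} = 1 / (D + 1) := by
    simp_rw [mul_rpow_neg_lt_mul_rpow_neg_iff hd₁ hd₂, ← hD]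
    rw [measureReal_lt_const_mul_of_indepFun_expMeasure one_pos one_pos (inv_pos.2 hDpos) hlaw1
      hlaw2 hind]
    field_simp
    ring
  have hP₂₁ : P.real {ω | h2sq ω * d₂ ^ (-α) < h1sq ω * d₁ ^ (-α)} = D / (D + 1) := by
    simp_rw [mul_rpow_neg_lt_mul_rpow_neg_iff hd₂ hd₁, inv_div, ← hD]
    rw [measureReal_lt_const_mul_of_indepFun_expMeasure one_pos one_pos hDpos hlaw2 hlaw1
      hind.symm, one_mul]
  rw [← measureReal_def, ← measureReal_def,
    hindO.measureReal_compl_inter_add_measureReal_inter hO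
      (measurableSet_lt (h1m.mul_const _) (h2m.mul_const _))
      (measurableSet_lt (h2m.mul_const _) (h1m.mul_const _)),
    hP₁₂, hP₂₁, measureReal_def, hp]
  field_simp
  ring

/-- Corollary 1 (decoding order error probability under Rayleigh fading): for two users at
distances `0 < d₁ < d₂` with independent `Exp(1)` fading powers `|h₁|², |h₂|²`, channel gains
`|hₘ|² dₘ^{-α}`, and an event `O` (disordered distance estimates, `d̂₁ > d̂₂`) of probability `p`
independent of the fading, the decoding order error probability
`P(Oᶜ ∩ {|h₁|² d₁^{-α} < |h₂|² d₂^{-α}}) + P(O ∩ {|h₁|² d₁^{-α} > |h₂|² d₂^{-α}})`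
equals `((D-1)/(D+1)) p + 1/(D+1)` with `D = d₂^α / d₁^α`. -/
theorem decoding_order_error_probability_rayleigh
    {Ω : Type*} [MeasurableSpace Ω] (P : Measure Ω) [IsProbabilityMeasure P]
    (d₁ d₂ α D p : ℝ) (hd₁ : 0 < d₁) (hd : d₁ < d₂) (hα : 0 < α)
    (hD : D = d₂ ^ α / d₁ ^ α)
    (h1sq h2sq : Ω → ℝ) (hm1 : Measurable h1sq) (hm2 : Measurable h2sq)
    (hlaw1 : P.map h1sq = expMeasure 1) (hlaw2 : P.map h2sq = expMeasure 1)
    (hind : IndepFun h1sq h2sq P)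
    (O : Set Ω) (hO : MeasurableSet O) (hp : (P O).toReal = p)
    (hindO : Indep (MeasurableSpace.generateFrom {O})
      (MeasurableSpace.comap (fun ω => (h1sq ω, h2sq ω)) inferInstance) P) :
    (P (Oᶜ ∩ {ω | h1sq ω * d₁ ^ (-α) < h2sq ω * d₂ ^ (-α)})).toReal +
    (P (O ∩ {ω | h2sq ω * d₂ ^ (-α) < h1sq ω * d₁ ^ (-α)})).toReal =
      (D - 1) / (D + 1) * p + 1 / (D + 1) :=
  decoding_order_error_probability_rayleigh_general P d₁ d₂ α D p hd₁ hd hD h1sq h2sq hlaw1 hlaw2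
    hind O hO hp hindO
end

section
/- Let λ₁, λ₂ > 0, ρ > 0, ε₀ > 0, p ∈ [0,1], and β ∈ (0,1) with β > (1−β)ε₀. Set A = ε₀/(ρ(β−(1−β)ε₀)), B = ε₀/(ρ(1−β)), and ζ = max(A,B). Let X₁ ~ Exp(λ₁) and X₂ ~ Exp(λ₂) be independent, and let E be an event independent of (X₁,X₂) with P(E) = p. Define the success event S = {βX₁/((1−β)X₁ + 1/ρ) > ε₀} ∩ {βX₂/((1−β)X₂ + 1/ρ) > ε₀} ∩ {ρ(1−β)W > ε₀}, where W = X₁ on Eᶜ and W = X₂ on E. Then the common outage probability satisfies P(Sᶜ) = 1 − (1−p)·e^{−(λ₂A + λ₁ζ)} − p·e^{−(λ₁A + λ₂ζ)}. -/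
open MeasureTheory ProbabilityTheory Real Set
open scoped Classical

/-!
Since the gains are a.s. nonnegative, each decoding condition is a threshold condition on one
gain: the signal of power `β` is decoded iff the gain exceeds `A`, the signal of power `1 - β` iff
`W` exceeds `B`. Hence on `Eᶜ` success means `X₁ > ζ, X₂ > A`, and on `E` it means
`X₁ > A, X₂ > ζ`. Independence of `E` from `(X₁, X₂)` and of `X₁` from `X₂` turns the probability
of success into `(1 - p) e^{-(l₁ζ + l₂A)} + p e^{-(l₁A + l₂ζ)}`.
-/

lemma lt_sinr_iff {ρ β ε₀ x : ℝ} (hρ : 0 < ρ) (hβ : β ≤ 1) (hβε : (1 - β) * ε₀ < β)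
    (hx : 0 ≤ x) :
    ε₀ < β * x / ((1 - β) * x + 1 / ρ) ↔ ε₀ / (ρ * (β - (1 - β) * ε₀)) < x := by
  have hden : 0 < (1 - β) * x + 1 / ρ := by
    have : 0 ≤ (1 - β) * x := mul_nonneg (by linarith) hx
    positivity
  have hscaled : ρ * (ε₀ * ((1 - β) * x + 1 / ρ)) = ρ * (1 - β) * ε₀ * x + ε₀ := by
    field_simp
  rw [lt_div_iff₀ hden, div_lt_iff₀ (mul_pos hρ (by linarith)), ← mul_lt_mul_iff_right₀ hρ,
    hscaled]
  constructor <;> intro h <;> linarith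

namespace ProbabilityTheory

lemma expMeasure_Iio_zero (r : ℝ) : expMeasure r (Iio 0) = 0 :=
  (withDensity_apply _ measurableSet_Iio).trans (lintegral_exponentialPDF_of_nonpos le_rfl)

lemma expMeasure_real_Ioi {r t : ℝ} (hr : 0 < r) (ht : 0 ≤ t) :
    (expMeasure r).real (Ioi t) = exp (-(r * t)) := by
  have := isProbabilityMeasure_expMeasure hr
  rw [← compl_Iic, probReal_compl_eq_one_sub measurableSet_Iic, ← cdf_eq_real,
    cdf_expMeasure_eq hr, if_pos ht, sub_sub_cancel]

variable {Ω : Type*} [MeasurableSpace Ω] {P : Measure Ω}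

lemma ae_nonneg_of_map_eq_expMeasure {X : Ω → ℝ} {r : ℝ} (hX : Measurable X)
    (hlaw : P.map X = expMeasure r) : ∀ᵐ ω ∂P, 0 ≤ X ω := by
  refine ae_of_ae_map hX.aemeasurable (ae_iff.2 ?_)
  rw [hlaw]
  exact measure_mono_null (fun x hx ↦ lt_of_not_ge hx) (expMeasure_Iio_zero r)

lemma measureReal_preimage_Ioi_of_map_eq_expMeasure {X : Ω → ℝ} {r t : ℝ} (hX : Measurable X)
    (hlaw : P.map X = expMeasure r) (hr : 0 < r) (ht : 0 ≤ t) :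
    P.real (X ⁻¹' Ioi t) = exp (-(r * t)) := by
  rw [← map_measureReal_apply hX measurableSet_Ioi, hlaw, expMeasure_real_Ioi hr ht]

lemma measureReal_preimage_Ioi_prod_Ioi_of_indepFun {X₁ X₂ : Ω → ℝ} {r₁ r₂ a b : ℝ}
    (hind : IndepFun X₁ X₂ P) (hm₁ : Measurable X₁) (hm₂ : Measurable X₂)
    (hlaw₁ : P.map X₁ = expMeasure r₁) (hlaw₂ : P.map X₂ = expMeasure r₂)
    (hr₁ : 0 < r₁) (hr₂ : 0 < r₂) (ha : 0 ≤ a) (hb : 0 ≤ b) :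
    P.real ((fun ω ↦ (X₁ ω, X₂ ω)) ⁻¹' (Ioi a ×ˢ Ioi b)) = exp (-(r₁ * a + r₂ * b)) := by
  rw [mk_preimage_prod, measureReal_def,
    hind.measure_inter_preimage_eq_mul _ _ measurableSet_Ioi measurableSet_Ioi,
    ENNReal.toReal_mul, ← measureReal_def, ← measureReal_def,
    measureReal_preimage_Ioi_of_map_eq_expMeasure hm₁ hlaw₁ hr₁ ha,
    measureReal_preimage_Ioi_of_map_eq_expMeasure hm₂ hlaw₂ hr₂ hb, ← exp_add, neg_add]

lemma measureReal_ite_preimage_of_indep [IsProbabilityMeasure P] {β : Type*} [MeasurableSpace β]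
    {Y : Ω → β} {E : Set Ω} {s t : Set β}
    (hindE : Indep (MeasurableSpace.generateFrom {E}) (MeasurableSpace.comap Y inferInstance) P)
    (hE : MeasurableSet E) (hs : MeasurableSet s) (ht : MeasurableSet t) :
    P.real (E.ite (Y ⁻¹' s) (Y ⁻¹' t)) =
      P.real E * P.real (Y ⁻¹' s) + (1 - P.real E) * P.real (Y ⁻¹' t) := by
  have hEgen : MeasurableSet[MeasurableSpace.generateFrom {E}] E :=
    MeasurableSpace.measurableSet_generateFrom rfl
  have hmul : ∀ F, MeasurableSet[MeasurableSpace.generateFrom {E}] F → ∀ u, MeasurableSet u →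
      P.real (Y ⁻¹' u ∩ F) = P.real F * P.real (Y ⁻¹' u) := fun F hF u hu ↦ by
    rw [inter_comm, measureReal_def, (Indep_iff _ _ _).1 hindE F _ hF ⟨u, hu, rfl⟩,
      ENNReal.toReal_mul, measureReal_def, measureReal_def]
  rw [← measureReal_inter_add_sdiff hE, ite_inter_self, sdiff_eq, ite_inter_compl_self,
    hmul E hEgen s hs, hmul Eᶜ hEgen.compl t ht, probReal_compl_eq_one_sub hE]

end ProbabilityTheory

theorem downlink_noma_common_outage_probability_general
    {Ω : Type*} [MeasurableSpace Ω] (P : Measure Ω) [IsProbabilityMeasure P]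
    (l₁ l₂ ρ ε₀ p β A B ζ : ℝ) (hl₁ : 0 < l₁) (hl₂ : 0 < l₂) (hρ : 0 < ρ) (hε₀ : 0 < ε₀)
    (hβ : β ∈ Set.Ioo (0 : ℝ) 1) (hβε : (1 - β) * ε₀ < β)
    (hA : A = ε₀ / (ρ * (β - (1 - β) * ε₀))) (hB : B = ε₀ / (ρ * (1 - β)))
    (hζ : ζ = max A B)
    (X₁ X₂ : Ω → ℝ) (hm1 : Measurable X₁) (hm2 : Measurable X₂)
    (hlaw1 : P.map X₁ = expMeasure l₁) (hlaw2 : P.map X₂ = expMeasure l₂)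
    (hind : IndepFun X₁ X₂ P)
    (E : Set Ω) (hE : MeasurableSet E) (hPE : (P E).toReal = p)
    (hindE : Indep (MeasurableSpace.generateFrom {E})
      (MeasurableSpace.comap (fun ω => (X₁ ω, X₂ ω)) inferInstance) P)
    (S : Set Ω)
    (hS : S = {ω | ε₀ < β * X₁ ω / ((1 - β) * X₁ ω + 1 / ρ)} ∩
              {ω | ε₀ < β * X₂ ω / ((1 - β) * X₂ ω + 1 / ρ)} ∩
              {ω | ε₀ < ρ * (1 - β) * (if ω ∈ E then X₂ ω else X₁ ω)}) :
    (P Sᶜ).toReal =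
      1 - (1 - p) * Real.exp (-(l₂ * A + l₁ * ζ)) - p * Real.exp (-(l₁ * A + l₂ * ζ)) := by
  obtain ⟨-, hβ1⟩ := hβ
  have hA0 : 0 ≤ A := hA ▸ div_nonneg hε₀.le (mul_pos hρ (by linarith)).le
  have hζ0 : 0 ≤ ζ := hA0.trans (hζ ▸ le_max_left A B)
  set T : ℝ → ℝ → Set Ω := fun a b ↦ (fun ω ↦ (X₁ ω, X₂ ω)) ⁻¹' (Ioi a ×ˢ Ioi b) with hT
  have hT_meas : ∀ a b, MeasurableSet (T a b) := fun a b ↦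
    hm1.prodMk hm2 (measurableSet_Ioi.prod measurableSet_Ioi)
  have hS_ae : S =ᵐ[P] E.ite (T A ζ) (T ζ A) := by
    refine Filter.eventuallyEq_set.2 ?_
    filter_upwards [ae_nonneg_of_map_eq_expMeasure hm1 hlaw1,
      ae_nonneg_of_map_eq_expMeasure hm2 hlaw2] with ω h₁ h₂
    rw [hS]
    simp only [mem_inter_iff, mem_ofPred_eq, hA ▸ lt_sinr_iff hρ hβ1.le hβε h₁,
      hA ▸ lt_sinr_iff hρ hβ1.le hβε h₂, hB ▸ (div_lt_iff₀' (mul_pos hρ (sub_pos.2 hβ1))).symm]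
    by_cases hω : ω ∈ E <;>
      simp only [hω, ↓reduceIte, Set.ite, hT, hζ, mem_union, mem_inter_iff, mem_sdiff, mem_preimage,
        mem_prod, mem_Ioi, max_lt_iff, and_true, and_false, not_true_eq_false, not_false_eq_true,
        or_false, false_or] <;>
      tauto
  have hPE' : P.real E = p := hPE
  rw [← measureReal_def, measureReal_congr hS_ae.compl,
    probReal_compl_eq_one_sub (hE.ite (hT_meas _ _) (hT_meas _ _)),
    measureReal_ite_preimage_of_indep hindE hE (measurableSet_Ioi.prod measurableSet_Ioi)
      (measurableSet_Ioi.prod measurableSet_Ioi),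
    measureReal_preimage_Ioi_prod_Ioi_of_indepFun hind hm1 hm2 hlaw1 hlaw2 hl₁ hl₂ hA0 hζ0,
    measureReal_preimage_Ioi_prod_Ioi_of_indepFun hind hm1 hm2 hlaw1 hlaw2 hl₁ hl₂ hζ0 hA0, hPE',
    add_comm (l₁ * ζ)]
  ring

/-- Proposition 2: the common outage probability of two-user downlink distance-based NOMA.
With independent gains `X₁ ~ Exp(l₁)`, `X₂ ~ Exp(l₂)`, an independent event `E` of probability
`p` (disordered distance estimates), `W = X₁` on `Eᶜ` and `W = X₂` on `E`, power factor `β`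
with `β > (1-β)ε₀`, `A = ε₀/(ρ(β-(1-β)ε₀))`, `B = ε₀/(ρ(1-β))`, `ζ = max(A,B)`, the
probability that the success event `S` fails equals
`1 - (1-p) e^{-(l₂A + l₁ζ)} - p e^{-(l₁A + l₂ζ)}`. -/
theorem downlink_noma_common_outage_probability
    {Ω : Type*} [MeasurableSpace Ω] (P : Measure Ω) [IsProbabilityMeasure P]
    (l₁ l₂ ρ ε₀ p β A B ζ : ℝ) (hl₁ : 0 < l₁) (hl₂ : 0 < l₂) (hρ : 0 < ρ) (hε₀ : 0 < ε₀)
    (hp : p ∈ Set.Icc (0 : ℝ) 1) (hβ : β ∈ Set.Ioo (0 : ℝ) 1) (hβε : (1 - β) * ε₀ < β)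
    (hA : A = ε₀ / (ρ * (β - (1 - β) * ε₀))) (hB : B = ε₀ / (ρ * (1 - β)))
    (hζ : ζ = max A B)
    (X₁ X₂ : Ω → ℝ) (hm1 : Measurable X₁) (hm2 : Measurable X₂)
    (hlaw1 : P.map X₁ = expMeasure l₁) (hlaw2 : P.map X₂ = expMeasure l₂)
    (hind : IndepFun X₁ X₂ P)
    (E : Set Ω) (hE : MeasurableSet E) (hPE : (P E).toReal = p)
    (hindE : Indep (MeasurableSpace.generateFrom {E})
      (MeasurableSpace.comap (fun ω => (X₁ ω, X₂ ω)) inferInstance) P)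
    (S : Set Ω)
    (hS : S = {ω | ε₀ < β * X₁ ω / ((1 - β) * X₁ ω + 1 / ρ)} ∩
              {ω | ε₀ < β * X₂ ω / ((1 - β) * X₂ ω + 1 / ρ)} ∩
              {ω | ε₀ < ρ * (1 - β) * (if ω ∈ E then X₂ ω else X₁ ω)}) :
    (P Sᶜ).toReal =
      1 - (1 - p) * Real.exp (-(l₂ * A + l₁ * ζ)) - p * Real.exp (-(l₁ * A + l₂ * ζ)) :=
  downlink_noma_common_outage_probability_general P l₁ l₂ ρ ε₀ p β A B ζ hl₁ hl₂ hρ hε₀ hβ hβε hA hB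
    hζ X₁ X₂ hm1 hm2 hlaw1 hlaw2 hind E hE hPE hindE S hS
end

section
/- Let 0 < λ₁ < λ₂, ε₀ > 0, ρ > 0, and suppose λ₁(1+ε₀) ≠ λ₂. For β ∈ (ε₀/(1+ε₀), 1), define A(β) = ε₀/(ρ(β−(1−β)ε₀)), B(β) = ε₀/(ρ(1−β)), and F(β) = 1 − exp(−(λ₂A(β) + λ₁·max(A(β),B(β)))). Then β* = [√(1+ε₀)·(ε₀λ₁−λ₂) + √(λ₁λ₂)] / [√(1+ε₀)·(λ₁(1+ε₀)−λ₂)] lies in (ε₀/(1+ε₀), 1) and is a global minimizer of F on (ε₀/(1+ε₀), 1), i.e., F(β*) ≤ F(β) for all β ∈ (ε₀/(1+ε₀), 1). -/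
/-!
With `u = β - (1 - β) ε₀`, the interval `(ε₀/(1+ε₀), 1)` corresponds to `u ∈ (0, 1)`,
`1 - u = (1 + ε₀)(1 - β)`, and `l₂ A + l₁ B = (ε₀/ρ) (l₂/u + l₁(1+ε₀)/(1-u))`.
Since `max(A, B) ≥ B`, the exponent of `F` is bounded below by this quantity, which by
Cauchy–Schwarz (Titu's form) is at least `(ε₀/ρ)(√l₂ + √(l₁(1+ε₀)))²`, with equality at
`u = √l₂ / (√l₂ + √(l₁(1+ε₀)))`, i.e. at `β*`. There `A ≤ B` because `l₁ < l₂`, so the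
bound is attained by `F` itself.
-/

open Real Set

theorem sq_add_le_sq_div_add_sq_div_one_sub (p q : ℝ) {u : ℝ} (hu₀ : 0 < u) (hu₁ : u < 1) :
    (p + q) ^ 2 ≤ p ^ 2 / u + q ^ 2 / (1 - u) := by
  have h1u : 0 < 1 - u := sub_pos.mpr hu₁
  rw [div_add_div _ _ hu₀.ne' h1u.ne', le_div_iff₀ (mul_pos hu₀ h1u)]
  nlinarith [sq_nonneg (p * (1 - u) - q * u)]

theorem sq_div_add_sq_div_one_sub_div_add {p q : ℝ} (hpq : p + q ≠ 0) :
    p ^ 2 / (p / (p + q)) + q ^ 2 / (1 - p / (p + q)) = (p + q) ^ 2 := by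
  rw [one_sub_div hpq, add_sub_cancel_left, div_div_eq_mul_div, div_div_eq_mul_div, sq, sq,
    mul_div_right_comm, mul_div_right_comm (q * q), mul_self_div_self, mul_self_div_self]
  ring

theorem sqrt_mul_sqrt_le_mul_sqrt {x y c : ℝ} (hxy : x ≤ y) (hc : 1 ≤ c) :
    √x * √c ≤ c * √y := calc
  √x * √c ≤ √y * √c := by gcongr
  _ ≤ √y * √c * √c := le_mul_of_one_le_right (by positivity) (one_le_sqrt.2 hc)
  _ = c * √y := by rw [mul_assoc, mul_self_sqrt (by linarith), mul_comm]

theorem mem_Ioo_iff_sub_one_sub_mul_mem_Ioo {ε₀ β : ℝ} (hε : 0 < 1 + ε₀) :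
    β ∈ Ioo (ε₀ / (1 + ε₀)) 1 ↔ β - (1 - β) * ε₀ ∈ Ioo 0 1 := by
  rw [mem_Ioo, mem_Ioo, div_lt_iff₀ hε]
  constructor <;> rintro ⟨h₀, h₁⟩ <;> constructor <;> nlinarith

theorem outage_exponent_eq {l₁ l₂ ε₀ ρ β : ℝ} (hε : 1 + ε₀ ≠ 0) :
    l₂ * (ε₀ / (ρ * (β - (1 - β) * ε₀))) + l₁ * (ε₀ / (ρ * (1 - β))) =
      ε₀ / ρ * (l₂ / (β - (1 - β) * ε₀) + l₁ * (1 + ε₀) / (1 - (β - (1 - β) * ε₀))) := by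
  rw [show 1 - (β - (1 - β) * ε₀) = (1 + ε₀) * (1 - β) by ring, mul_comm l₁ (1 + ε₀),
    mul_div_mul_left _ _ hε, ← div_div, ← div_div]
  ring

theorem optimal_beta_sub_one_sub_mul_eq {l₁ l₂ ε₀ βs : ℝ} (hl₁ : 0 ≤ l₁) (hl₂ : 0 < l₂)
    (hε : 0 < 1 + ε₀) (hne : l₁ * (1 + ε₀) ≠ l₂)
    (hβs : βs = (√(1 + ε₀) * (ε₀ * l₁ - l₂) + √(l₁ * l₂)) /
      (√(1 + ε₀) * (l₁ * (1 + ε₀) - l₂))) :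
    βs - (1 - βs) * ε₀ = √l₂ / (√l₂ + √l₁ * √(1 + ε₀)) := by
  obtain ⟨a, ha, rfl⟩ : ∃ a, 0 ≤ a ∧ l₁ = a ^ 2 := ⟨√l₁, sqrt_nonneg _, (sq_sqrt hl₁).symm⟩
  obtain ⟨b, hb, rfl⟩ : ∃ b, 0 < b ∧ l₂ = b ^ 2 := ⟨√l₂, sqrt_pos.2 hl₂, (sq_sqrt hl₂.le).symm⟩
  obtain ⟨s, hs, rfl⟩ : ∃ s, 0 < s ∧ ε₀ = s ^ 2 - 1 :=
    ⟨√(1 + ε₀), sqrt_pos.2 hε, by rw [sq_sqrt hε.le]; ring⟩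
  simp only [add_sub_cancel, sqrt_sq ha, sqrt_sq hb.le, sqrt_sq hs.le, ← mul_pow,
    sqrt_sq (mul_nonneg ha hb.le)] at hβs hne ⊢
  have hsum : b + a * s ≠ 0 := by positivity
  have hdiff : s ^ 2 * a ^ 2 - b ^ 2 ≠ 0 := sub_ne_zero.2 (by rwa [← mul_pow, mul_comm])
  subst hβs
  field_simp
  ring

theorem one_sub_le_sub_one_sub_mul_of_eq_div {ε₀ β p q : ℝ} (hε : 0 < 1 + ε₀)
    (hpq : 0 < p + q) (hq : q ≤ (1 + ε₀) * p) (hβ : β - (1 - β) * ε₀ = p / (p + q)) :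
    1 - β ≤ β - (1 - β) * ε₀ := by
  have h : (1 + ε₀) * (1 - β) ≤ (1 + ε₀) * (p / (p + q)) := calc
    (1 + ε₀) * (1 - β) = 1 - p / (p + q) := by rw [← hβ]; ring
    _ = q / (p + q) := by rw [one_sub_div hpq.ne', add_sub_cancel_left]
    _ ≤ (1 + ε₀) * p / (p + q) := div_le_div_of_nonneg_right hq hpq.le
    _ = (1 + ε₀) * (p / (p + q)) := mul_div_assoc _ _ _
  rw [hβ]
  exact le_of_mul_le_mul_left h hε

/-- Corollary 2 (optimal dynamic power allocation for downlink NOMA): for `0 < l₁ < l₂`,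
target SNR `ε₀ > 0`, SNR `ρ > 0` with `l₁(1+ε₀) ≠ l₂`, the common outage probability
`F(β) = 1 - exp(-(l₂ A(β) + l₁ max(A(β), B(β))))` on `(ε₀/(1+ε₀), 1)`, with
`A(β) = ε₀/(ρ(β-(1-β)ε₀))` and `B(β) = ε₀/(ρ(1-β))`, is globally minimized at
`β* = (√(1+ε₀)(ε₀l₁-l₂) + √(l₁l₂)) / (√(1+ε₀)(l₁(1+ε₀)-l₂))`, which lies in the interval. -/
theorem downlink_noma_optimal_power_allocation
    (l₁ l₂ ε₀ ρ : ℝ) (hl₁ : 0 < l₁) (hl₁₂ : l₁ < l₂) (hε₀ : 0 < ε₀) (hρ : 0 < ρ)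
    (hne : l₁ * (1 + ε₀) ≠ l₂)
    (A B F : ℝ → ℝ)
    (hA : ∀ β, A β = ε₀ / (ρ * (β - (1 - β) * ε₀)))
    (hB : ∀ β, B β = ε₀ / (ρ * (1 - β)))
    (hF : ∀ β, F β = 1 - Real.exp (-(l₂ * A β + l₁ * max (A β) (B β))))
    (βs : ℝ)
    (hβs : βs = (Real.sqrt (1 + ε₀) * (ε₀ * l₁ - l₂) + Real.sqrt (l₁ * l₂)) /
      (Real.sqrt (1 + ε₀) * (l₁ * (1 + ε₀) - l₂))) :
    βs ∈ Set.Ioo (ε₀ / (1 + ε₀)) 1 ∧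
      ∀ β ∈ Set.Ioo (ε₀ / (1 + ε₀)) 1, F βs ≤ F β := by
  have hε : 0 < 1 + ε₀ := by linarith
  have hl₂ : 0 < l₂ := hl₁.trans hl₁₂
  set p := √l₂
  set q := √l₁ * √(1 + ε₀)
  have hp2 : p ^ 2 = l₂ := sq_sqrt hl₂.le
  have hq2 : q ^ 2 = l₁ * (1 + ε₀) := by rw [mul_pow, sq_sqrt hl₁.le, sq_sqrt hε.le]
  have hpq : 0 < p + q := by positivity
  have hus : βs - (1 - βs) * ε₀ = p / (p + q) :=
    optimal_beta_sub_one_sub_mul_eq hl₁.le hl₂ hε hne hβs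
  have hmem : βs ∈ Ioo (ε₀ / (1 + ε₀)) 1 := by
    rw [mem_Ioo_iff_sub_one_sub_mul_mem_Ioo hε, hus]
    exact ⟨by positivity, (div_lt_one hpq).2 (by simp only [lt_add_iff_pos_right]; positivity)⟩
  have hAB : A βs ≤ B βs := by
    have hq := sqrt_mul_sqrt_le_mul_sqrt hl₁₂.le (le_add_of_nonneg_right hε₀.le)
    rw [hA, hB]
    gcongr ε₀ / (ρ * ?_)
    · exact mul_pos hρ (sub_pos.2 hmem.2)
    · exact one_sub_le_sub_one_sub_mul_of_eq_div hε hpq hq hus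
  refine ⟨hmem, fun β hβ => ?_⟩
  have hu := (mem_Ioo_iff_sub_one_sub_mul_mem_Ioo hε).1 hβ
  rw [hF, hF, max_eq_right hAB, sub_le_sub_iff_left, exp_le_exp, neg_le_neg_iff]
  calc l₂ * A βs + l₁ * B βs = ε₀ / ρ * (p + q) ^ 2 := by
        rw [hA, hB, outage_exponent_eq hε.ne', hus, ← hp2, ← hq2,
          sq_div_add_sq_div_one_sub_div_add hpq.ne']
    _ ≤ ε₀ / ρ * (p ^ 2 / (β - (1 - β) * ε₀) + q ^ 2 / (1 - (β - (1 - β) * ε₀))) := by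
        gcongr
        exact sq_add_le_sq_div_add_sq_div_one_sub p q hu.1 hu.2
    _ = l₂ * A β + l₁ * B β := by rw [hA, hB, outage_exponent_eq hε.ne', hp2, hq2]
    _ ≤ l₂ * A β + l₁ * max (A β) (B β) := by gcongr; exact le_max_right _ _
end

section
/- Let 0 < λ₁ < λ₂ and ε₀ > 0 with λ₁(1+ε₀) ≠ λ₂. Then β⁺ = [√(1+ε₀)·(ε₀λ₁−λ₂) + √(λ₁λ₂)] / [√(1+ε₀)·(λ₁(1+ε₀)−λ₂)] satisfies (ε₀+1)/(ε₀+2) < β⁺ < 1. -/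
open Real Set

/-- Root location (Appendix D, feature 1): for `0 < l₁ < l₂` and `ε₀ > 0` with
`l₁(1+ε₀) ≠ l₂`, the root `β⁺ = (√(1+ε₀)(ε₀l₁-l₂) + √(l₁l₂)) / (√(1+ε₀)(l₁(1+ε₀)-l₂))`
satisfies `(ε₀+1)/(ε₀+2) < β⁺ < 1`. -/
theorem downlink_noma_root_plus_location
    (l₁ l₂ ε₀ : ℝ) (hl₁ : 0 < l₁) (hl₁₂ : l₁ < l₂) (hε₀ : 0 < ε₀)
    (hne : l₁ * (1 + ε₀) ≠ l₂)
    (βp : ℝ)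
    (hβp : βp = (Real.sqrt (1 + ε₀) * (ε₀ * l₁ - l₂) + Real.sqrt (l₁ * l₂)) /
      (Real.sqrt (1 + ε₀) * (l₁ * (1 + ε₀) - l₂))) :
    (ε₀ + 1) / (ε₀ + 2) < βp ∧ βp < 1 := by
  have ht : (0:ℝ) < 1 + ε₀ := by linarith
  have hl₂ : (0:ℝ) < l₂ := lt_trans hl₁ hl₁₂
  set s := Real.sqrt (1 + ε₀) with hs
  set u := Real.sqrt l₁ with hu
  set v := Real.sqrt l₂ with hv
  have hs2 : s ^ 2 = 1 + ε₀ := Real.sq_sqrt ht.le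
  have hu2 : u ^ 2 = l₁ := Real.sq_sqrt hl₁.le
  have hv2 : v ^ 2 = l₂ := Real.sq_sqrt hl₂.le
  have huvm : Real.sqrt (l₁ * l₂) = u * v := Real.sqrt_mul hl₁.le l₂
  have hspos : 0 < s := Real.sqrt_pos.2 ht
  have hupos : 0 < u := Real.sqrt_pos.2 hl₁
  have hvpos : 0 < v := Real.sqrt_pos.2 hl₂
  have huv : u < v := Real.sqrt_lt_sqrt hl₁.le hl₁₂
  have hs1 : 1 < s := by
    have : Real.sqrt 1 < s := Real.sqrt_lt_sqrt (by norm_num) (by linarith)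
    simpa using this
  have husv : u < s * v := by nlinarith
  have key : (s * (ε₀ * l₁ - l₂) + u * v) * (ε₀ + 2)
      - (ε₀ + 1) * (s * (l₁ * (1 + ε₀) - l₂)) = (s * u - v) * (s * v - u) := by
    rw [show ε₀ = s ^ 2 - 1 by linarith, ← hu2, ← hv2]; ring
  have key2 : s * (l₁ * (1 + ε₀) - l₂) - (s * (ε₀ * l₁ - l₂) + u * v)
      = u * (s * u - v) := by rw [← hu2]; ring
  rw [hβp, huvm]
  rcases lt_or_gt_of_ne hne with h | h
  · -- l₁(1+ε₀) < l₂ : denominator negative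
    have hD : s * (l₁ * (1 + ε₀) - l₂) < 0 :=
      mul_neg_of_pos_of_neg hspos (by linarith)
    have hsuv : s * u < v := by
      have hsq : (s * u) ^ 2 < v ^ 2 := by nlinarith
      exact lt_of_pow_lt_pow_left₀ 2 hvpos.le hsq
    have hrw : (s * (ε₀ * l₁ - l₂) + u * v) / (s * (l₁ * (1 + ε₀) - l₂))
        = (-(s * (ε₀ * l₁ - l₂) + u * v)) / (-(s * (l₁ * (1 + ε₀) - l₂))) :=
      (neg_div_neg_eq _ _).symm
    rw [hrw]
    constructor
    · rw [div_lt_div_iff₀ (by linarith) (by linarith)]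
      linarith [key, mul_pos (sub_pos.2 hsuv) (sub_pos.2 husv)]
    · rw [div_lt_one (by linarith)]
      linarith [key2, mul_pos hupos (sub_pos.2 hsuv)]
  · -- l₂ < l₁(1+ε₀) : denominator positive
    have hD : 0 < s * (l₁ * (1 + ε₀) - l₂) := mul_pos hspos (by linarith)
    have hsuv : v < s * u := by
      have hsq : v ^ 2 < (s * u) ^ 2 := by nlinarith
      exact lt_of_pow_lt_pow_left₀ 2 (by positivity) hsq
    constructor
    · rw [div_lt_div_iff₀ (by linarith) hD]
      linarith [key, mul_pos (sub_pos.2 hsuv) (sub_pos.2 husv)]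
    · rw [div_lt_one hD]
      linarith [key2, mul_pos hupos (sub_pos.2 hsuv)]
end

section
/- Let 0 < λ₁ < λ₂ and ε₀ > 0 with λ₁(1+ε₀) ≠ λ₂, and define β⁻ = [√(1+ε₀)·(ε₀λ₁−λ₂) − √(λ₁λ₂)] / [√(1+ε₀)·(λ₁(1+ε₀)−λ₂)]. If λ₁(1+ε₀) > λ₂, then β⁻ < (ε₀+1)/(ε₀+2); if λ₁(1+ε₀) < λ₂, then β⁻ > 1. -/
open Real Set

/-- Root location (Appendix D, features 2 and 3): for `0 < l₁ < l₂` and `ε₀ > 0` with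
`l₁(1+ε₀) ≠ l₂`, the root `β⁻ = (√(1+ε₀)(ε₀l₁-l₂) - √(l₁l₂)) / (√(1+ε₀)(l₁(1+ε₀)-l₂))`
satisfies `β⁻ < (ε₀+1)/(ε₀+2)` when `l₁(1+ε₀) > l₂`, and `β⁻ > 1` when `l₁(1+ε₀) < l₂`. -/
theorem downlink_noma_root_minus_location
    (l₁ l₂ ε₀ : ℝ) (hl₁ : 0 < l₁) (hl₁₂ : l₁ < l₂) (hε₀ : 0 < ε₀)
    (hne : l₁ * (1 + ε₀) ≠ l₂)
    (βm : ℝ)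
    (hβm : βm = (Real.sqrt (1 + ε₀) * (ε₀ * l₁ - l₂) - Real.sqrt (l₁ * l₂)) /
      (Real.sqrt (1 + ε₀) * (l₁ * (1 + ε₀) - l₂))) :
    (l₂ < l₁ * (1 + ε₀) → βm < (ε₀ + 1) / (ε₀ + 2)) ∧
    (l₁ * (1 + ε₀) < l₂ → 1 < βm) := by
  have hs : 0 < Real.sqrt (1 + ε₀) := Real.sqrt_pos.mpr (by linarith)
  have ht : 0 < Real.sqrt (l₁ * l₂) :=
    Real.sqrt_pos.mpr (mul_pos hl₁ (hl₁.trans hl₁₂))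
  constructor
  · intro h
    have hden : 0 < Real.sqrt (1 + ε₀) * (l₁ * (1 + ε₀) - l₂) :=
      mul_pos hs (by linarith)
    rw [hβm, div_lt_div_iff₀ hden (by linarith : (0:ℝ) < ε₀ + 2)]
    nlinarith [mul_pos hs ht, mul_pos hε₀ ht]
  · intro h
    have hden : Real.sqrt (1 + ε₀) * (l₁ * (1 + ε₀) - l₂) < 0 :=
      mul_neg_of_pos_of_neg hs (by linarith)
    rw [hβm, lt_div_iff_of_neg hden]
    nlinarith [mul_pos hs hl₁]
end

section
/- Let 0 < λ₁ < λ₂, ε₀ > 0, and Ω₁, Ω₂ > 0. Define g(ρ₁, ρ₂) = 1 − (λ₂/(λ₂ + ε₀·ρ₂·λ₁/ρ₁)) · exp( −λ₁(ε₀ + ε₀²)/ρ₁ − λ₂ε₀/ρ₂ ) for ρ₁, ρ₂ > 0, and set ρ₂⁺ = (ε₀λ₁λ₂ + λ₂·√(4Ω₁λ₁ + ε₀²λ₁²)) / (2λ₁). Then (ρ₁*, ρ₂*) = (Ω₁, min(Ω₂, ρ₂⁺)) is a global minimizer of g over (0, Ω₁] × (0, Ω₂]: g(ρ₁*, ρ₂*)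 ≤ g(ρ₁, ρ₂) for all (ρ₁, ρ₂) ∈ (0, Ω₁] × (0, Ω₂]. -/
open Real Set

/-!
Raising `ρ₁` lowers both the interference term `ε₀ ρ₂ l₁ / ρ₁` and the exponent
`l₁ (ε₀ + ε₀²) / ρ₁`, so `ρ₁ = Ω₁` is optimal whatever `ρ₂` is. For fixed `ρ₁`, the logarithm of
the success probability `1 - g` is, up to a constant, `-ε₀ l₂ / ρ₂ - log (l₂ + ε₀ l₁ ρ₂ / ρ₁)`,
whose derivative in `ρ₂` has the sign of `r - ρ₂`, where `r` is the positive root of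
`l₁ r² = ε₀ l₁ l₂ r + l₂² ρ₁`; for `ρ₁ = Ω₁` this root is `ρ₂⁺`. Being unimodal with peak `ρ₂⁺`,
the success probability is largest on `(0, Ω₂]` at `min Ω₂ ρ₂⁺`.
-/

theorem le_apply_min_of_monotoneOn_of_antitoneOn {α β : Type*} [LinearOrder α] [Preorder β]
    {f : α → β} {a r W x : α} (hmono : MonotoneOn f (Ioc a r)) (hanti : AntitoneOn f (Ici r))
    (har : a < r) (hx : x ∈ Ioc a W) : f x ≤ f (min W r) := by
  rcases le_total x r with hxr | hrx
  · have hmin : min W r ∈ Ioc a r := ⟨lt_min (hx.1.trans_le hx.2) har, min_le_right W r⟩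
    exact hmono ⟨hx.1, hxr⟩ hmin (le_min hx.2 hxr)
  · rw [min_eq_right (hrx.trans hx.2)]
    exact hanti self_mem_Ici hrx hrx

/-- Up to an additive constant, the logarithm of the success probability `1 - g` as a function
of `x = ρ₂`, with `a = ε₀ l₁ / ρ₁`, `b = ε₀ l₂`, `c = l₂`. -/
noncomputable def successExponent (a b c x : ℝ) : ℝ := -(b / x) - log (c + a * x)

section SuccessExponent

variable {a b c r : ℝ}

theorem hasDerivAt_successExponent {x : ℝ} (hx : x ≠ 0) (hcx : c + a * x ≠ 0) :
    HasDerivAt (successExponent a b c) (b / x ^ 2 - a / (c + a * x)) x := by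
  have hlin : HasDerivAt (fun y => c + a * y) a x := by
    simpa using ((hasDerivAt_id x).const_mul a).const_add c
  have hdiv : HasDerivAt (fun y => b / y) ((0 * x - b * 1) / x ^ 2) x :=
    (hasDerivAt_const x b).div (hasDerivAt_id x) hx
  refine (hdiv.neg.sub ((hasDerivAt_log hcx).comp x hlin)).congr_deriv ?_
  field_simp
  ring

/-- The other root of `a r² = a b r + b c` is `b - r`, whence the factor `r + x - b`. -/
theorem hasDerivAt_successExponent_of_root (ha : 0 < a) (hc : 0 ≤ c)
    (hr : a * r ^ 2 = a * b * r + b * c) {x : ℝ} (hx : 0 < x) :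
    HasDerivAt (successExponent a b c) (a * (r - x) * (r + x - b) / (x ^ 2 * (c + a * x))) x := by
  have hcx : c + a * x ≠ 0 := by positivity
  refine (hasDerivAt_successExponent hx.ne' hcx).congr_deriv ?_
  rw [div_sub_div _ _ (pow_ne_zero 2 hx.ne') hcx]
  congr 1
  linear_combination -hr

theorem le_of_successQuadratic_root (ha : 0 < a) (hb : 0 ≤ b) (hc : 0 ≤ c) (hr₀ : 0 < r)
    (hr : a * r ^ 2 = a * b * r + b * c) : b ≤ r :=
  le_of_mul_le_mul_left (by nlinarith [mul_nonneg hb hc]) (mul_pos ha hr₀)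

theorem monotoneOn_successExponent (ha : 0 < a) (hb : 0 ≤ b) (hc : 0 ≤ c) (hr₀ : 0 < r)
    (hr : a * r ^ 2 = a * b * r + b * c) : MonotoneOn (successExponent a b c) (Ioc 0 r) := by
  have hbr := le_of_successQuadratic_root ha hb hc hr₀ hr
  refine monotoneOn_of_hasDerivWithinAt_nonneg (convex_Ioc 0 r)
    (fun x hx => (hasDerivAt_successExponent_of_root ha hc hr
      hx.1).continuousAt.continuousWithinAt)
    (fun x hx => (hasDerivAt_successExponent_of_root ha hc hr
      (interior_subset hx).1).hasDerivWithinAt)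
    fun x hx => ?_
  rw [interior_Ioc] at hx
  have hx₀ : 0 < x := hx.1
  have hxr : 0 ≤ r - x := by linarith [hx.2]
  have hxrb : 0 ≤ r + x - b := by linarith
  positivity

theorem antitoneOn_successExponent (ha : 0 < a) (hb : 0 ≤ b) (hc : 0 ≤ c) (hr₀ : 0 < r)
    (hr : a * r ^ 2 = a * b * r + b * c) : AntitoneOn (successExponent a b c) (Ici r) := by
  have hbr := le_of_successQuadratic_root ha hb hc hr₀ hr
  refine antitoneOn_of_hasDerivWithinAt_nonpos (convex_Ici r)
    (fun x hx => (hasDerivAt_successExponent_of_root ha hc hr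
      (hr₀.trans_le hx)).continuousAt.continuousWithinAt)
    (fun x hx => (hasDerivAt_successExponent_of_root ha hc hr
      (hr₀.trans_le (interior_subset hx))).hasDerivWithinAt)
    fun x hx => ?_
  rw [interior_Ici] at hx
  have hx₀ : 0 < x := hr₀.trans hx
  refine div_nonpos_of_nonpos_of_nonneg
    (mul_nonpos_of_nonpos_of_nonneg (mul_nonpos_of_nonneg_of_nonpos ha.le ?_) ?_) (by positivity)
  · linarith [mem_Ioi.1 hx]
  · linarith

theorem successExponent_le_min (ha : 0 < a) (hb : 0 ≤ b) (hc : 0 ≤ c) (hr₀ : 0 < r)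
    (hr : a * r ^ 2 = a * b * r + b * c) {W x : ℝ} (hx : x ∈ Ioc 0 W) :
    successExponent a b c x ≤ successExponent a b c (min W r) :=
  le_apply_min_of_monotoneOn_of_antitoneOn (monotoneOn_successExponent ha hb hc hr₀ hr)
    (antitoneOn_successExponent ha hb hc hr₀ hr) hr₀ hx

end SuccessExponent

/-- The success probability `1 - g ρ₁ ρ₂`. -/
noncomputable def nomaSuccessProb (l₁ l₂ ε₀ ρ₁ ρ₂ : ℝ) : ℝ :=
  l₂ / (l₂ + ε₀ * ρ₂ * l₁ / ρ₁) * exp (-(l₁ * (ε₀ + ε₀ ^ 2) / ρ₁) - l₂ * ε₀ / ρ₂)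

/-- `ρ₂⁺`. -/
noncomputable def nomaOptimalRho₂ (l₁ l₂ ε₀ Ω₁ : ℝ) : ℝ :=
  (ε₀ * l₁ * l₂ + l₂ * √(4 * Ω₁ * l₁ + ε₀ ^ 2 * l₁ ^ 2)) / (2 * l₁)

section Noma

variable {l₁ l₂ ε₀ : ℝ}

theorem nomaSuccessProb_le_of_le_left (hl₁ : 0 ≤ l₁) (hl₂ : 0 < l₂) (hε₀ : 0 ≤ ε₀)
    {ρ₁ ρ₁' ρ₂ : ℝ} (hρ₁ : 0 < ρ₁) (hρ₁' : ρ₁ ≤ ρ₁') (hρ₂ : 0 < ρ₂) :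
    nomaSuccessProb l₁ l₂ ε₀ ρ₁ ρ₂ ≤ nomaSuccessProb l₁ l₂ ε₀ ρ₁' ρ₂ := by
  have hρ₁'₀ : 0 < ρ₁' := hρ₁.trans_le hρ₁'
  unfold nomaSuccessProb
  gcongr

theorem nomaSuccessProb_eq (hl₁ : 0 < l₁) (hl₂ : 0 < l₂) (hε₀ : 0 < ε₀) {ρ₁ ρ₂ : ℝ}
    (hρ₁ : 0 < ρ₁) (hρ₂ : 0 < ρ₂) :
    nomaSuccessProb l₁ l₂ ε₀ ρ₁ ρ₂ = l₂ * exp (-(l₁ * (ε₀ + ε₀ ^ 2) / ρ₁)) *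
      exp (successExponent (ε₀ * l₁ / ρ₁) (ε₀ * l₂) l₂ ρ₂) := by
  have hden : 0 < l₂ + ε₀ * l₁ / ρ₁ * ρ₂ := by positivity
  simp only [nomaSuccessProb, successExponent, exp_sub, exp_neg, exp_log hden]
  field_simp

theorem nomaSuccessProb_le_min (hl₁ : 0 < l₁) (hl₂ : 0 < l₂) (hε₀ : 0 < ε₀) {ρ₁ r : ℝ}
    (hρ₁ : 0 < ρ₁) (hr₀ : 0 < r) (hr : l₁ * r ^ 2 = ε₀ * l₁ * l₂ * r + l₂ ^ 2 * ρ₁)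
    {W x : ℝ} (hx : x ∈ Ioc 0 W) :
    nomaSuccessProb l₁ l₂ ε₀ ρ₁ x ≤ nomaSuccessProb l₁ l₂ ε₀ ρ₁ (min W r) := by
  have hroot : ε₀ * l₁ / ρ₁ * r ^ 2 = ε₀ * l₁ / ρ₁ * (ε₀ * l₂) * r + ε₀ * l₂ * l₂ := by
    field_simp
    linear_combination hr
  rw [nomaSuccessProb_eq hl₁ hl₂ hε₀ hρ₁ hx.1,
    nomaSuccessProb_eq hl₁ hl₂ hε₀ hρ₁ (lt_min (hx.1.trans_le hx.2) hr₀)]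
  gcongr
  exact successExponent_le_min (by positivity) (by positivity) hl₂.le hr₀ hroot hx

theorem nomaOptimalRho₂_pos (hl₁ : 0 < l₁) (hl₂ : 0 < l₂) (hε₀ : 0 < ε₀) (Ω₁ : ℝ) :
    0 < nomaOptimalRho₂ l₁ l₂ ε₀ Ω₁ := by
  unfold nomaOptimalRho₂
  positivity

theorem nomaOptimalRho₂_root (hl₁ : 0 < l₁) {Ω₁ : ℝ} (hΩ₁ : 0 ≤ Ω₁) :
    l₁ * nomaOptimalRho₂ l₁ l₂ ε₀ Ω₁ ^ 2 =
      ε₀ * l₁ * l₂ * nomaOptimalRho₂ l₁ l₂ ε₀ Ω₁ + l₂ ^ 2 * Ω₁ := by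
  have hsq := sq_sqrt (by positivity : 0 ≤ 4 * Ω₁ * l₁ + ε₀ ^ 2 * l₁ ^ 2)
  unfold nomaOptimalRho₂
  set s := √(4 * Ω₁ * l₁ + ε₀ ^ 2 * l₁ ^ 2)
  field_simp
  linear_combination l₂ ^ 2 * hsq

end Noma

theorem uplink_noma_optimal_power_control_general
    (l₁ l₂ ε₀ W₁ W₂ : ℝ) (hl₁ : 0 < l₁) (hl₁₂ : l₁ < l₂) (hε₀ : 0 < ε₀)
    (g : ℝ → ℝ → ℝ)
    (hg : ∀ ρ₁ ρ₂, 0 < ρ₁ → 0 < ρ₂ → g ρ₁ ρ₂ =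
      1 - (l₂ / (l₂ + ε₀ * ρ₂ * l₁ / ρ₁)) *
        Real.exp (-(l₁ * (ε₀ + ε₀ ^ 2) / ρ₁) - l₂ * ε₀ / ρ₂))
    (ρ₂p : ℝ)
    (hρ₂p : ρ₂p = (ε₀ * l₁ * l₂ + l₂ * Real.sqrt (4 * W₁ * l₁ + ε₀ ^ 2 * l₁ ^ 2)) /
      (2 * l₁)) :
    ∀ ρ₁ ∈ Set.Ioc 0 W₁, ∀ ρ₂ ∈ Set.Ioc 0 W₂, g W₁ (min W₂ ρ₂p) ≤ g ρ₁ ρ₂ := by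
  rintro ρ₁ ⟨hρ₁, hρ₁W⟩ ρ₂ hρ₂
  have hl₂ : 0 < l₂ := hl₁.trans hl₁₂
  have hW₁ : 0 < W₁ := hρ₁.trans_le hρ₁W
  change ρ₂p = nomaOptimalRho₂ l₁ l₂ ε₀ W₁ at hρ₂p
  subst hρ₂p
  have hρ₂p₀ := nomaOptimalRho₂_pos hl₁ hl₂ hε₀ W₁
  rw [hg _ _ hW₁ (lt_min (hρ₂.1.trans_le hρ₂.2) hρ₂p₀), hg _ _ hρ₁ hρ₂.1]
  gcongr 1 - ?_
  calc nomaSuccessProb l₁ l₂ ε₀ ρ₁ ρ₂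
      ≤ nomaSuccessProb l₁ l₂ ε₀ W₁ ρ₂ :=
        nomaSuccessProb_le_of_le_left hl₁.le hl₂ hε₀.le hρ₁ hρ₁W hρ₂.1
    _ ≤ nomaSuccessProb l₁ l₂ ε₀ W₁ (min W₂ (nomaOptimalRho₂ l₁ l₂ ε₀ W₁)) :=
        nomaSuccessProb_le_min hl₁ hl₂ hε₀ hW₁ hρ₂p₀ (nomaOptimalRho₂_root hl₁ hW₁.le) hρ₂

/-- Corollary 3 (optimal dynamic power control for uplink NOMA): for `0 < l₁ < l₂`,
`ε₀ > 0` and power constraints `Ω₁, Ω₂ > 0`, the common outage probability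
`g(ρ₁, ρ₂) = 1 - (l₂/(l₂ + ε₀ρ₂l₁/ρ₁)) exp(-l₁(ε₀+ε₀²)/ρ₁ - l₂ε₀/ρ₂)` on
`(0, Ω₁] × (0, Ω₂]` is globally minimized at `(Ω₁, min(Ω₂, ρ₂⁺))`, where
`ρ₂⁺ = (ε₀l₁l₂ + l₂√(4Ω₁l₁ + ε₀²l₁²))/(2l₁)`. -/
theorem uplink_noma_optimal_power_control
    (l₁ l₂ ε₀ W₁ W₂ : ℝ) (hl₁ : 0 < l₁) (hl₁₂ : l₁ < l₂) (hε₀ : 0 < ε₀)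
    (hW₁ : 0 < W₁) (hW₂ : 0 < W₂)
    (g : ℝ → ℝ → ℝ)
    (hg : ∀ ρ₁ ρ₂, 0 < ρ₁ → 0 < ρ₂ → g ρ₁ ρ₂ =
      1 - (l₂ / (l₂ + ε₀ * ρ₂ * l₁ / ρ₁)) *
        Real.exp (-(l₁ * (ε₀ + ε₀ ^ 2) / ρ₁) - l₂ * ε₀ / ρ₂))
    (ρ₂p : ℝ)
    (hρ₂p : ρ₂p = (ε₀ * l₁ * l₂ + l₂ * Real.sqrt (4 * W₁ * l₁ + ε₀ ^ 2 * l₁ ^ 2)) /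
      (2 * l₁)) :
    ∀ ρ₁ ∈ Set.Ioc 0 W₁, ∀ ρ₂ ∈ Set.Ioc 0 W₂, g W₁ (min W₂ ρ₂p) ≤ g ρ₁ ρ₂ :=
  uplink_noma_optimal_power_control_general l₁ l₂ ε₀ W₁ W₂ hl₁ hl₁₂ hε₀ g hg ρ₂p hρ₂p
end

section
/- Let λ₁, λ₂, ε₀, Ω₁ > 0 and define h(ρ₂) = 1 − (λ₂/(λ₂ + ε₀·ρ₂·λ₁/Ω₁)) · exp( −λ₁(ε₀ + ε₀²)/Ω₁ − λ₂ε₀/ρ₂ ) for ρ₂ > 0, and ρ₂⁺ = (ε₀λ₁λ₂ + λ₂·√(4Ω₁λ₁ + ε₀²λ₁²)) / (2λ₁). Then ρ₂⁺ > 0, h is strictly decreasing on (0, ρ₂⁺] and strictly increasing on [ρ₂⁺, ∞); moreover the other root ρ₂⁻ = (ε₀λ₁λ₂ − λ₂·√(4Ω₁λ₁ + ε₀²λ₁²)) / (2λ₁) of λ₁ρ₂² − ε₀λ₁λ₂ρ₂ − Ω₁λ₂² is negative. -/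
/-! Differentiating, `h'(ρ₂)` is a positive multiple of the quadratic
`l₁ρ₂² - ε₀l₁l₂ρ₂ - W₁l₂²`. Its roots `ρ₂^±` have product `-W₁l₂²/l₁ < 0`, so `ρ₂⁻ < 0 < ρ₂⁺` and
on `ρ₂ > 0` the sign of `h'(ρ₂)` is that of `ρ₂ - ρ₂⁺`. -/

open Real Set

theorem quadratic_eq_mul_sub_mul_sub {K : Type*} [Field K] [NeZero (2 : K)] {a b c s : K}
    (ha : a ≠ 0) (hs : discrim a b c = s * s) (x : K) :
    a * (x * x) + b * x + c = a * (x - (-b + s) / (2 * a)) * (x - (-b - s) / (2 * a)) := by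
  rw [discrim] at hs
  field_simp
  linear_combination -hs

theorem quadratic_roots_neg_and_pos {K : Type*} [Field K] [LinearOrder K] [IsStrictOrderedRing K]
    {a b c s : K} (ha : 0 < a) (hc : c < 0) (hs0 : 0 ≤ s)
    (hs : discrim a b c = s * s) : (-b - s) / (2 * a) < 0 ∧ 0 < (-b + s) / (2 * a) := by
  rw [discrim] at hs
  obtain ⟨hsb, hbs⟩ := abs_lt.mp (abs_lt_of_sq_lt_sq (show b ^ 2 < s ^ 2 by nlinarith) hs0)
  exact ⟨div_neg_of_neg_of_pos (by linarith) (by positivity),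
    div_pos (by linarith) (by positivity)⟩

theorem hasDerivAt_one_sub_div_mul_exp {a b c C x : ℝ} (hx : x ≠ 0) (hcx : c + a * x ≠ 0) :
    HasDerivAt (fun y => 1 - c / (c + a * y) * exp (C - b / y))
      (c * exp (C - b / x) / ((c + a * x) ^ 2 * x ^ 2) * (a * x ^ 2 - a * b * x - b * c)) x := by
  have hlin : HasDerivAt (fun y => c + a * y) a x := by
    simpa using ((hasDerivAt_id x).const_mul a).const_add c
  have hexp : HasDerivAt (fun y => exp (C - b / y)) (exp (C - b / x) * (b / x ^ 2)) x := by
    have := ((hasDerivAt_inv hx).const_mul b).const_sub C |>.exp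
    convert this using 1
    · simp only [div_eq_mul_inv]
    · rw [div_eq_mul_inv]
      ring
  refine ((((hasDerivAt_const x c).fun_div hlin hcx).mul hexp).const_sub 1).congr_deriv ?_
  field_simp
  ring

theorem strictAntiOn_Ioc_and_strictMonoOn_Ici_of_hasDerivAt_mul_sub {f g : ℝ → ℝ} {a r : ℝ}
    (har : a < r) (hf : ∀ x, a < x → HasDerivAt f (g x * (x - r)) x)
    (hg : ∀ x, a < x → 0 < g x) :
    StrictAntiOn f (Ioc a r) ∧ StrictMonoOn f (Ici r) := by
  constructor
  · refine strictAntiOn_of_hasDerivWithinAt_neg (f' := fun x => g x * (x - r)) (convex_Ioc a r)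
      (fun x hx => (hf x hx.1).continuousAt.continuousWithinAt) (fun x hx => ?_) (fun x hx => ?_)
    all_goals rw [interior_Ioc] at hx
    · exact (hf x hx.1).hasDerivWithinAt
    · exact mul_neg_of_pos_of_neg (hg x hx.1) (sub_neg.mpr hx.2)
  · refine strictMonoOn_of_hasDerivWithinAt_pos (f' := fun x => g x * (x - r)) (convex_Ici r)
      (fun x hx => (hf x (har.trans_le hx)).continuousAt.continuousWithinAt)
      (fun x hx => ?_) (fun x hx => ?_)
    all_goals rw [interior_Ici] at hx
    · exact (hf x (har.trans hx)).hasDerivWithinAt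
    · exact mul_pos (hg x (har.trans hx)) (sub_pos.mpr hx)

/-- Appendix F (monotonicity of the uplink NOMA outage probability): for
`h(ρ₂) = 1 - (l₂/(l₂ + ε₀ρ₂l₁/W₁)) exp(-l₁(ε₀+ε₀²)/W₁ - l₂ε₀/ρ₂)` (the common outage
probability when user 1 transmits at maximum SNR `W₁`), the point
`ρ₂⁺ = (ε₀l₁l₂ + l₂√(4W₁l₁ + ε₀²l₁²))/(2l₁)` is positive, `h` is strictly decreasing on
`(0, ρ₂⁺]` and strictly increasing on `[ρ₂⁺, ∞)`, and the other root
`ρ₂⁻ = (ε₀l₁l₂ - l₂√(4W₁l₁ + ε₀²l₁²))/(2l₁)` of `l₁ρ₂² - ε₀l₁l₂ρ₂ - W₁l₂²` is negative. -/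
theorem uplink_noma_outage_unimodality
    (l₁ l₂ ε₀ W₁ : ℝ) (hl₁ : 0 < l₁) (hl₂ : 0 < l₂) (hε₀ : 0 < ε₀) (hW₁ : 0 < W₁)
    (h : ℝ → ℝ)
    (hh : ∀ ρ₂, 0 < ρ₂ → h ρ₂ =
      1 - (l₂ / (l₂ + ε₀ * ρ₂ * l₁ / W₁)) *
        Real.exp (-(l₁ * (ε₀ + ε₀ ^ 2) / W₁) - l₂ * ε₀ / ρ₂))
    (ρ₂p ρ₂m : ℝ)
    (hρ₂p : ρ₂p = (ε₀ * l₁ * l₂ + l₂ * Real.sqrt (4 * W₁ * l₁ + ε₀ ^ 2 * l₁ ^ 2)) /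
      (2 * l₁))
    (hρ₂m : ρ₂m = (ε₀ * l₁ * l₂ - l₂ * Real.sqrt (4 * W₁ * l₁ + ε₀ ^ 2 * l₁ ^ 2)) /
      (2 * l₁)) :
    0 < ρ₂p ∧ StrictAntiOn h (Set.Ioc 0 ρ₂p) ∧ StrictMonoOn h (Set.Ici ρ₂p) ∧ ρ₂m < 0 := by
  set s := l₂ * √(4 * W₁ * l₁ + ε₀ ^ 2 * l₁ ^ 2)
  have hs : discrim l₁ (-(ε₀ * l₁ * l₂)) (-(W₁ * l₂ ^ 2)) = s * s := by
    rw [discrim, mul_mul_mul_comm, mul_self_sqrt (by positivity)]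
    ring
  rw [← neg_neg (ε₀ * l₁ * l₂)] at hρ₂p hρ₂m
  have hfactor : ∀ x, l₁ * (x * x) + -(ε₀ * l₁ * l₂) * x + -(W₁ * l₂ ^ 2)
      = l₁ * (x - ρ₂p) * (x - ρ₂m) := by
    rw [hρ₂p, hρ₂m]
    exact quadratic_eq_mul_sub_mul_sub hl₁.ne' hs
  obtain ⟨hm, hp⟩ : ρ₂m < 0 ∧ 0 < ρ₂p := by
    rw [hρ₂p, hρ₂m]
    exact quadratic_roots_neg_and_pos hl₁ (neg_neg_of_pos (by positivity)) (by positivity) hs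
  set C := -(l₁ * (ε₀ + ε₀ ^ 2) / W₁)
  have hderiv : ∀ x, 0 < x → HasDerivAt h
      (l₂ * exp (C - l₂ * ε₀ / x) / ((l₂ + ε₀ * l₁ / W₁ * x) ^ 2 * x ^ 2) * (ε₀ * l₁ / W₁)
        * (x - ρ₂m) * (x - ρ₂p)) x := by
    intro x hx
    refine ((hasDerivAt_one_sub_div_mul_exp (a := ε₀ * l₁ / W₁) (b := l₂ * ε₀) (c := l₂)
      (C := C) hx.ne' (by positivity)).congr_of_eventuallyEq ?_).congr_deriv ?_
    · filter_upwards [Ioi_mem_nhds hx] with y hy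
      rw [hh y hy, mul_right_comm ε₀, mul_div_right_comm]
    · field_simp
      linear_combination hfactor x
  obtain ⟨hanti, hmono⟩ :=
    strictAntiOn_Ioc_and_strictMonoOn_Ici_of_hasDerivAt_mul_sub hp hderiv
      fun x hx => mul_pos (by positivity) (by linarith)
  exact ⟨hp, hanti, hmono, hm⟩
end
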